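/- arXiv:2211.02925 — 6 statements merged into one kernel-verified Lean document; each statement's English description precedes it below -/
import Mathlib

section
/- Let A be a countable type and k : A → A → ℝ≥0 a substochastic kernel (for every x, ∑_y k(x,y) ≤ 1) such that for every x the set {y | k(x,y) ≠ 0} is finite. Define the survival probabilities Q : ℕ → A → ℝ≥0 by Q(0,x) = 1 and Q(N+1,x) = ∑_y k(x,y)·Q(N,y). Fix x₀ ∈ A with Q(N,x₀) > 0 for all N, and suppose that for every y ∈ A the ratio Q(N−1,y)/Q(N,x₀) converges as N → ∞ to a limit h(y); set λ = h(x₀) and assume λ > 0. Then for every x ∈ A one has h(x) = λ · ∑_y k(x,y)·h(y). -/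
open scoped NNReal

/-- The limit of ratios of survival probabilities of a substochastic kernel is a
positive `λ`-harmonic function. -/
theorem survival_ratio_limit_is_harmonic
    {A : Type*} [Countable A] (k : A → A → ℝ≥0)
    (hsub : ∀ x, ∑' y, k x y ≤ 1)
    (hfin : ∀ x, {y | k x y ≠ 0}.Finite)
    (Q : ℕ → A → ℝ≥0)
    (hQ0 : ∀ x, Q 0 x = 1)
    (hQsucc : ∀ N x, Q (N + 1) x = ∑' y, k x y * Q N y)
    (x₀ : A) (hQpos : ∀ N, 0 < Q N x₀)
    (h : A → ℝ≥0)
    (hconv : ∀ y, Filter.Tendsto (fun N : ℕ => Q N y / Q (N + 1) x₀)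
      Filter.atTop (nhds (h y)))
    (lam : ℝ≥0) (hlam : lam = h x₀) (hlampos : 0 < lam) :
    ∀ x, h x = lam * ∑' y, k x y * h y := by
  intro x
  have hne : ∀ N, Q N x₀ ≠ 0 := fun N => (hQpos N).ne'
  set s := (hfin x).toFinset with hs
  have htsum : ∀ f : A → ℝ≥0, (∑' y, k x y * f y) = ∑ y ∈ s, k x y * f y := by
    intro f
    refine tsum_eq_sum ?_
    intro y hy
    have hk : k x y = 0 := by
      by_contra hk
      exact hy ((hfin x).mem_toFinset.mpr hk)
    simp [hk]
  have h1 : Filter.Tendsto (fun N : ℕ => Q (N+1) x / Q (N+1+1) x₀) Filter.atTop (nhds (h x)) :=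
    (hconv x).comp (Filter.tendsto_add_atTop_nat 1)
  have h2 : Filter.Tendsto (fun N : ℕ => Q (N+1) x₀ / Q (N+1+1) x₀) Filter.atTop (nhds lam) := by
    rw [hlam]
    exact (hconv x₀).comp (Filter.tendsto_add_atTop_nat 1)
  have h3 : Filter.Tendsto
      (fun N : ℕ => (∑ y ∈ s, k x y * (Q N y / Q (N+1) x₀)) * (Q (N+1) x₀ / Q (N+1+1) x₀))
      Filter.atTop (nhds ((∑ y ∈ s, k x y * h y) * lam)) :=
    Filter.Tendsto.mul (tendsto_finset_sum _ fun y _ => (hconv y).const_mul _) h2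
  have heq : ∀ N : ℕ, Q (N+1) x / Q (N+1+1) x₀
      = (∑ y ∈ s, k x y * (Q N y / Q (N+1) x₀)) * (Q (N+1) x₀ / Q (N+1+1) x₀) := by
    intro N
    rw [hQsucc, htsum (Q N), Finset.sum_mul, Finset.sum_div]
    refine Finset.sum_congr rfl fun y _ => ?_
    rw [mul_assoc, div_mul_div_cancel₀ (hne (N+1)), mul_div_assoc]
  have h1' : Filter.Tendsto
      (fun N : ℕ => (∑ y ∈ s, k x y * (Q N y / Q (N+1) x₀)) * (Q (N+1) x₀ / Q (N+1+1) x₀))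
      Filter.atTop (nhds (h x)) := by
    simpa only [heq] using h1
  rw [htsum h, mul_comm]
  exact tendsto_nhds_unique h1' h3
end

section
/- Let A be a countable type and k : A → A → ℝ≥0∞ a kernel such that for every x the set {z | k(x,z) ≠ 0} is finite and k(x,z) < ∞ for all x,z. Let G(x,y) = ∑'_{n≥0} kⁿ(x,y) be the Green function and for f : A → ℝ≥0∞ set Gf(x) = ∑'_y G(x,y)·f(y). Let (fₙ)_{n≥0} be a sequence of functions A → ℝ≥0∞ and g : A → ℝ≥0∞ be such that: (i) for every x, fₙ(x) → 0 as n → ∞; (ii) for every x, Gfₙ(x) → g(x) as n → ∞ and g(x) < ∞. Then g is harmonic for k: for every x ∈ A, g(x) = ∑'_z k(x,z)·g(z). -/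
open scoped ENNReal

/-- The `n`-fold iterate of a kernel `k : A → A → ℝ≥0∞`. -/
noncomputable def iterKernel {A : Type*} [DecidableEq A]
    (k : A → A → ℝ≥0∞) : ℕ → A → A → ℝ≥0∞
  | 0 => fun x y => if x = y then 1 else 0
  | (n + 1) => fun x y => ∑' z, k x z * iterKernel k n z y

/-- The Green function of a kernel `k : A → A → ℝ≥0∞`. -/
noncomputable def greenFunction {A : Type*} [DecidableEq A]
    (k : A → A → ℝ≥0∞) (x y : A) : ℝ≥0∞ :=
  ∑' n : ℕ, iterKernel k n x y

lemma green_rec {A : Type*} [DecidableEq A] (k : A → A → ℝ≥0∞) (x y : A) :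
    greenFunction k x y = (if x = y then 1 else 0) + ∑' z, k x z * greenFunction k z y := by
  rw [greenFunction, tsum_eq_zero_add' ENNReal.summable]
  congr 1
  simp only [iterKernel]
  rw [ENNReal.tsum_comm]
  refine tsum_congr fun z => ?_
  rw [ENNReal.tsum_mul_left]
  rfl

lemma pot_rec {A : Type*} [DecidableEq A] (k : A → A → ℝ≥0∞) (f : A → ℝ≥0∞) (x : A) :
    ∑' y, greenFunction k x y * f y
      = f x + ∑' z, k x z * ∑' y, greenFunction k z y * f y := by
  calc ∑' y, greenFunction k x y * f y
      = ∑' y, ((if x = y then 1 else 0) * f y + (∑' z, k x z * greenFunction k z y) * f y) := by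
        refine tsum_congr fun y => ?_
        rw [← add_mul, ← green_rec]
    _ = (∑' y, (if x = y then 1 else 0) * f y)
        + ∑' y, (∑' z, k x z * greenFunction k z y) * f y := ENNReal.tsum_add
    _ = f x + ∑' z, k x z * ∑' y, greenFunction k z y * f y := by
        congr 1
        · rw [tsum_eq_single x]
          · simp
          · intro y hy
            simp [Ne.symm hy]
        · simp_rw [← ENNReal.tsum_mul_right]
          rw [ENNReal.tsum_comm]
          refine tsum_congr fun z => ?_
          rw [← ENNReal.tsum_mul_left]
          refine tsum_congr fun y => ?_
          ring

/-- If `fₙ → 0` pointwise while the Green potentials `G fₙ` converge pointwise to a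
finite limit `g`, then `g` is harmonic for the (finite-range, finite-valued)
kernel `k`. -/
theorem limit_of_green_potentials_is_harmonic
    {A : Type*} [Countable A] [DecidableEq A] (k : A → A → ℝ≥0∞)
    (hfin : ∀ x, {z | k x z ≠ 0}.Finite)
    (hval : ∀ x z, k x z < ∞)
    (f : ℕ → A → ℝ≥0∞) (g : A → ℝ≥0∞)
    (hf0 : ∀ x, Filter.Tendsto (fun n => f n x) Filter.atTop (nhds 0))
    (hGf : ∀ x, Filter.Tendsto (fun n => ∑' y, greenFunction k x y * f n y)
      Filter.atTop (nhds (g x)))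
    (hgfin : ∀ x, g x < ∞) :
    ∀ x : A, g x = ∑' z, k x z * g z := by
  intro x
  set s := (hfin x).toFinset with hs
  have hsum : ∀ h : A → ℝ≥0∞, ∑' z, k x z * h z = ∑ z ∈ s, k x z * h z := by
    intro h
    refine tsum_eq_sum fun z hz => ?_
    have : k x z = 0 := by
      by_contra hne
      exact hz (by simpa [hs] using hne)
    simp [this]
  have hlim2 : Filter.Tendsto (fun n => ∑' z, k x z * ∑' y, greenFunction k z y * f n y)
      Filter.atTop (nhds (∑' z, k x z * g z)) := by
    simp_rw [hsum]
    exact tendsto_finset_sum s fun z _ =>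
      ENNReal.Tendsto.const_mul (hGf z) (Or.inr (hval x z).ne)
  have hlimR : Filter.Tendsto
      (fun n => f n x + ∑' z, k x z * ∑' y, greenFunction k z y * f n y)
      Filter.atTop (nhds (0 + ∑' z, k x z * g z)) := (hf0 x).add hlim2
  rw [zero_add] at hlimR
  have hlimR' : Filter.Tendsto (fun n => ∑' y, greenFunction k x y * f n y)
      Filter.atTop (nhds (∑' z, k x z * g z)) := by
    refine hlimR.congr fun n => ?_
    exact (pot_rec k (f n) x).symm
  exact tendsto_nhds_unique (hGf x) hlimR'
end

section
/- Let f : ℤ² → ℝ≥0 be finitely supported with ∑_x f(x) = 1, assume 0 belongs to the interior of the convex hull (in ℝ²) of the support of f, and that the drift m = ∑_x f(x)·x is nonzero. Define L : ℝ² → ℝ by L(θ) = ∑_x f(x)·exp(⟨θ,x⟩) (a finite sum). Then the sublevel set K = {θ ∈ ℝ² | L(θ) ≤ 1} is convex, compact, has nonempty interior, and its topological frontier equals the level set {θ ∈ ℝ² | L(θ) = 1}. -/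
set_option maxHeartbeats 1000000

open scoped NNReal
open Real Set

private lemma convexOn_finset_sum' {ι E : Type*} [AddCommGroup E] [Module ℝ E]
    (t : Finset ι) (g : ι → E → ℝ)
    (hg : ∀ i ∈ t, ConvexOn ℝ Set.univ (g i)) :
    ConvexOn ℝ Set.univ (fun x => ∑ i ∈ t, g i x) := by
  classical
  induction t using Finset.induction_on with
  | empty => simpa using convexOn_const (0 : ℝ) convex_univ
  | insert _ _ h ih =>
      simp only [Finset.sum_insert h]
      exact (hg _ (Finset.mem_insert_self _ _)).add
        (ih fun i hi => hg i (Finset.mem_insert_of_mem hi))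

private lemma sq_norm_le_prod {θ : ℝ × ℝ} : ‖θ‖ ^ 2 ≤ θ.1 ^ 2 + θ.2 ^ 2 := by
  have h : ‖θ‖ = max ‖θ.1‖ ‖θ.2‖ := rfl
  rcases max_cases ‖θ.1‖ ‖θ.2‖ with ⟨he, _⟩ | ⟨he, _⟩ <;> rw [h, he] <;>
    simp only [Real.norm_eq_abs, sq_abs] <;> nlinarith [sq_nonneg θ.1, sq_nonneg θ.2]

/-- For a finitely supported probability distribution on `ℤ²` with `0` interior to the
convex hull of the support and nonzero drift, the sublevel set `{L ≤ 1}` of the Laplace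
transform is a compact convex body whose frontier is the level set `{L = 1}`. -/
theorem ney_spitzer_level_set
    (f : ℤ × ℤ → ℝ≥0) (hfin : (Function.support f).Finite)
    (hsum : ∑ᶠ x : ℤ × ℤ, (f x : ℝ) = 1)
    (hhull : (0 : ℝ × ℝ) ∈ interior (convexHull ℝ
      ((fun z : ℤ × ℤ => (((z.1 : ℝ), (z.2 : ℝ)) : ℝ × ℝ)) '' Function.support f)))
    (m : ℝ × ℝ)
    (hm : m = ∑ᶠ x : ℤ × ℤ, (f x : ℝ) • (((x.1 : ℝ), (x.2 : ℝ)) : ℝ × ℝ))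
    (hm0 : m ≠ 0)
    (L : ℝ × ℝ → ℝ)
    (hL : ∀ θ : ℝ × ℝ,
      L θ = ∑ᶠ x : ℤ × ℤ, (f x : ℝ) * Real.exp (θ.1 * (x.1 : ℝ) + θ.2 * (x.2 : ℝ)))
    (K : Set (ℝ × ℝ)) (hK : K = {θ : ℝ × ℝ | L θ ≤ 1}) :
    Convex ℝ K ∧ IsCompact K ∧ (interior K).Nonempty ∧
      frontier K = {θ : ℝ × ℝ | L θ = 1} := by
  classical
  set s : Finset (ℤ × ℤ) := hfin.toFinset with hs
  have hmem : ∀ x, x ∈ s ↔ f x ≠ 0 := fun x => hfin.mem_toFinset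
  -- finsum → finset sum conversion
  have hsupp : ∀ {M : Type} [AddCommMonoid M] (g : ℤ × ℤ → M),
      (∀ x, f x = 0 → g x = 0) → ∑ᶠ x, g x = ∑ x ∈ s, g x := by
    intro M _ g hg
    apply finsum_eq_sum_of_support_subset
    intro x hx
    simp only [hs, Set.Finite.coe_toFinset, Function.mem_support]
    exact fun h0 => hx (hg x h0)
  have hsum' : ∑ x ∈ s, (f x : ℝ) = 1 := by
    rw [← hsum]; exact (hsupp _ (by intro x hx; simp [hx])).symm
  have hL' : ∀ θ : ℝ × ℝ,
      L θ = ∑ x ∈ s, (f x : ℝ) * Real.exp (θ.1 * (x.1 : ℝ) + θ.2 * (x.2 : ℝ)) := by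
    intro θ; rw [hL θ]; exact hsupp _ (by intro x hx; simp [hx])
  have hm' : m = ∑ x ∈ s, (f x : ℝ) • (((x.1 : ℝ), (x.2 : ℝ)) : ℝ × ℝ) := by
    rw [hm]; exact hsupp _ (by intro x hx; simp [hx])
  -- basic positivity facts
  have hf_nonneg : ∀ x : ℤ × ℤ, (0 : ℝ) ≤ (f x : ℝ) := fun x => (f x).coe_nonneg
  have hsne : s.Nonempty := by
    rcases Finset.eq_empty_or_nonempty s with h | h
    · rw [h] at hsum'; simp at hsum'
    · exact h
  -- continuity of L
  have hLfun : L = fun θ : ℝ × ℝ =>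
      ∑ x ∈ s, (f x : ℝ) * Real.exp (θ.1 * (x.1 : ℝ) + θ.2 * (x.2 : ℝ)) := funext hL'
  have hLc : Continuous L := by
    rw [hLfun]
    apply continuous_finset_sum
    intro x _
    exact continuous_const.mul
      (((continuous_fst.mul continuous_const).add (continuous_snd.mul continuous_const)).rexp)
  -- convexity of L
  have hconv : ConvexOn ℝ Set.univ L := by
    rw [hLfun]
    apply convexOn_finset_sum'
    intro x _
    have hlin : IsLinearMap ℝ (fun θ : ℝ × ℝ => θ.1 * (x.1 : ℝ) + θ.2 * (x.2 : ℝ)) :=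
      ⟨by intro a b; simp [Prod.fst_add, Prod.snd_add]; ring,
       by intro c a; simp [Prod.smul_fst, Prod.smul_snd, smul_eq_mul]; ring⟩
    have h1 := (convexOn_exp.comp_linearMap (hlin.mk' _)).smul (hf_nonneg x)
    simp only [Set.preimage_univ, Function.comp, IsLinearMap.mk'_apply, smul_eq_mul] at h1
    exact h1
  have hKconv : Convex ℝ K := by
    rw [hK]
    have := hconv.convex_le 1
    simpa using this
  have hKclosed : IsClosed K := by
    rw [hK]; exact isClosed_le hLc continuous_const
  -- lower bound on f over the support
  set c : ℝ := s.inf' hsne (fun x => (f x : ℝ)) with hc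
  have hcpos : 0 < c := by
    rw [hc, Finset.lt_inf'_iff]
    intro x hx
    have := (hmem x).1 hx
    positivity
  have hcle : ∀ x ∈ s, c ≤ (f x : ℝ) := fun x hx => Finset.inf'_le _ hx
  -- boundedness of K
  obtain ⟨ε, hε, hball⟩ := Metric.mem_nhds_iff.mp (mem_interior_iff_mem_nhds.mp hhull)
  -- radius bound
  set R : ℝ := max 0 (2 * Real.log (1 / c) / ε) with hR
  have hKsub : K ⊆ Metric.closedBall 0 R := by
    intro θ hθ
    rw [hK] at hθ
    simp only [Metric.mem_closedBall, dist_zero_right]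
    rcases eq_or_ne θ 0 with rfl | hθ0
    · simpa [hR] using le_max_left 0 _
    have hθn : 0 < ‖θ‖ := norm_pos_iff.mpr hθ0
    -- the point (ε/2/‖θ‖) • θ lies in the ball hence in the hull
    set v : ℝ × ℝ := ((ε / 2) / ‖θ‖) • θ with hv
    have hvball : v ∈ Metric.ball (0 : ℝ × ℝ) ε := by
      rw [mem_ball_zero_iff, hv, norm_smul]
      have : ‖(ε / 2) / ‖θ‖‖ = (ε / 2) / ‖θ‖ := abs_of_pos (by positivity)
      rw [this]
      rw [div_mul_cancel₀ _ (ne_of_gt hθn)]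
      linarith
    have hvhull := hball hvball
    -- linear functional bound over the hull
    set M : ℝ := s.sup' hsne (fun x => θ.1 * (x.1 : ℝ) + θ.2 * (x.2 : ℝ)) with hM
    have hhalf : convexHull ℝ
        ((fun z : ℤ × ℤ => (((z.1 : ℝ), (z.2 : ℝ)) : ℝ × ℝ)) '' Function.support f) ⊆
        {w : ℝ × ℝ | θ.1 * w.1 + θ.2 * w.2 ≤ M} := by
      apply convexHull_min
      · rintro w ⟨x, hx, rfl⟩
        have hxs : x ∈ s := (hmem x).2 hx
        exact Finset.le_sup' (fun x : ℤ × ℤ => θ.1 * (x.1 : ℝ) + θ.2 * (x.2 : ℝ)) hxs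
      · exact convex_halfSpace_le
          ⟨by intro a b; simp [Prod.fst_add, Prod.snd_add]; ring,
           by intro r a; simp [Prod.smul_fst, Prod.smul_snd, smul_eq_mul]; ring⟩ M
    have hvle : θ.1 * v.1 + θ.2 * v.2 ≤ M := hhalf hvhull
    have hvval : θ.1 * v.1 + θ.2 * v.2 = ((ε / 2) / ‖θ‖) * (θ.1 ^ 2 + θ.2 ^ 2) := by
      rw [hv]; simp [Prod.smul_fst, Prod.smul_snd, smul_eq_mul]; ring
    have hvge : (ε / 2) * ‖θ‖ ≤ θ.1 * v.1 + θ.2 * v.2 := by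
      rw [hvval]
      have h1 : ‖θ‖ ^ 2 ≤ θ.1 ^ 2 + θ.2 ^ 2 := sq_norm_le_prod
      have h2 : ((ε / 2) / ‖θ‖) * ‖θ‖ ^ 2 = (ε / 2) * ‖θ‖ := by
        field_simp
      rw [← h2]
      apply mul_le_mul_of_nonneg_left h1 (by positivity)
    have hMge : (ε / 2) * ‖θ‖ ≤ M := le_trans hvge hvle
    -- get an element of s attaining the sup
    obtain ⟨x, hxs, hxM⟩ := Finset.exists_mem_eq_sup' hsne
      (fun x : ℤ × ℤ => θ.1 * (x.1 : ℝ) + θ.2 * (x.2 : ℝ))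
    have hxge : (ε / 2) * ‖θ‖ ≤ θ.1 * (x.1 : ℝ) + θ.2 * (x.2 : ℝ) := by
      rw [← hxM]; exact hMge
    -- single term lower bound on L θ
    have hterm : (f x : ℝ) * Real.exp (θ.1 * (x.1 : ℝ) + θ.2 * (x.2 : ℝ)) ≤ L θ := by
      rw [hL' θ]
      apply Finset.single_le_sum (f := fun x : ℤ × ℤ =>
        (f x : ℝ) * Real.exp (θ.1 * (x.1 : ℝ) + θ.2 * (x.2 : ℝ))) _ hxs
      intro y _
      positivity
    have h3 : c * Real.exp ((ε / 2) * ‖θ‖) ≤ 1 := by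
      calc c * Real.exp ((ε / 2) * ‖θ‖)
          ≤ (f x : ℝ) * Real.exp (θ.1 * (x.1 : ℝ) + θ.2 * (x.2 : ℝ)) := by
            apply mul_le_mul (hcle x hxs) (Real.exp_le_exp.mpr hxge) (by positivity) (hf_nonneg x)
        _ ≤ L θ := hterm
        _ ≤ 1 := hθ
    have h4 : Real.exp ((ε / 2) * ‖θ‖) ≤ 1 / c := by
      rw [le_div_iff₀ hcpos]; linarith [mul_comm c (Real.exp ((ε / 2) * ‖θ‖))]
    have h5 : (ε / 2) * ‖θ‖ ≤ Real.log (1 / c) := by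
      have := Real.log_le_log (by positivity) h4
      rwa [Real.log_exp] at this
    have h6 : ‖θ‖ ≤ 2 * Real.log (1 / c) / ε := by
      rw [le_div_iff₀ hε]
      nlinarith
    exact le_trans h6 (le_max_right _ _)
  have hKcompact : IsCompact K :=
    (isCompact_closedBall (0 : ℝ × ℝ) R).of_isClosed_subset hKclosed hKsub
  -- existence of a point with L < 1
  have hL0 : L 0 = 1 := by
    rw [hL' 0]; simpa using hsum'
  -- the directional derivative of t ↦ L (-t • m) at 0 is -(m.1^2+m.2^2) < 0
  set d : ℤ × ℤ → ℝ := fun x => m.1 * (x.1 : ℝ) + m.2 * (x.2 : ℝ) with hd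
  set g : ℝ → ℝ := fun t => L (-t • m) with hgdef
  have hg : ∀ t, g t = ∑ x ∈ s, (f x : ℝ) * Real.exp (t * (-(d x))) := by
    intro t
    rw [hgdef]
    simp only
    rw [hL' (-t • m)]
    apply Finset.sum_congr rfl
    intro x _
    congr 1
    simp [Prod.smul_fst, Prod.smul_snd, smul_eq_mul, hd]
    ring
  have hm1 : m.1 = ∑ x ∈ s, (f x : ℝ) * (x.1 : ℝ) := by
    rw [hm']
    rw [Prod.fst_sum]
    apply Finset.sum_congr rfl
    intro x _; simp [Prod.smul_fst, smul_eq_mul]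
  have hm2 : m.2 = ∑ x ∈ s, (f x : ℝ) * (x.2 : ℝ) := by
    rw [hm']
    rw [Prod.snd_sum]
    apply Finset.sum_congr rfl
    intro x _; simp [Prod.smul_snd, smul_eq_mul]
  have hsumd : ∑ x ∈ s, (f x : ℝ) * d x = m.1 ^ 2 + m.2 ^ 2 := by
    have : ∀ x ∈ s, (f x : ℝ) * d x
        = m.1 * ((f x : ℝ) * (x.1 : ℝ)) + m.2 * ((f x : ℝ) * (x.2 : ℝ)) := by
      intro x _; simp only [hd]; ring
    rw [Finset.sum_congr rfl this, Finset.sum_add_distrib, ← Finset.mul_sum, ← Finset.mul_sum,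
      ← hm1, ← hm2]
    ring
  have hdpos : 0 < m.1 ^ 2 + m.2 ^ 2 := by
    have : m.1 ≠ 0 ∨ m.2 ≠ 0 := by
      by_contra h
      push_neg at h
      exact hm0 (Prod.ext h.1 h.2)
    rcases this with h | h
    · nlinarith [sq_nonneg m.2, sq_abs m.1, abs_pos.mpr h]
    · nlinarith [sq_nonneg m.1, sq_abs m.2, abs_pos.mpr h]
  have hgderiv : HasDerivAt g (∑ x ∈ s, (f x : ℝ) * (Real.exp (0 * (-(d x))) * (-(d x)))) 0 := by
    have hfun : g = fun t => ∑ x ∈ s, (f x : ℝ) * Real.exp (t * (-(d x))) := funext hg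
    rw [hfun]
    apply HasDerivAt.fun_sum
    intro x _
    exact ((hasDerivAt_mul_const (-(d x))).exp).const_mul _
  have hg'val : (∑ x ∈ s, (f x : ℝ) * (Real.exp (0 * (-(d x))) * (-(d x))))
      = -(m.1 ^ 2 + m.2 ^ 2) := by
    rw [← hsumd, ← Finset.sum_neg_distrib]
    apply Finset.sum_congr rfl
    intro x _
    simp
  have hg'neg : (∑ x ∈ s, (f x : ℝ) * (Real.exp (0 * (-(d x))) * (-(d x)))) < 0 := by
    rw [hg'val]; linarith
  have hslope := hasDerivAt_iff_tendsto_slope.mp hgderiv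
  have hev : ∀ᶠ t in nhdsWithin (0 : ℝ) {(0 : ℝ)}ᶜ, slope g 0 t < 0 :=
    hslope.eventually_lt_const hg'neg
  have hev' : ∀ᶠ t in nhdsWithin (0 : ℝ) (Set.Ioi 0), slope g 0 t < 0 :=
    hev.filter_mono (nhdsWithin_mono 0 (fun t ht => ne_of_gt ht))
  obtain ⟨t, hts, htI⟩ := (hev'.and self_mem_nhdsWithin).exists
  have htpos : (0 : ℝ) < t := htI
  have hg0 : g 0 = 1 := by
    rw [hgdef]; simp only [neg_zero, zero_smul]; exact hL0
  have hgt1 : g t < 1 := by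
    rw [slope_def_field] at hts
    rw [hg0] at hts
    have ht0 : t - 0 > 0 := by linarith
    rcases div_neg_iff.mp hts with ⟨h1, h2⟩ | ⟨h1, h2⟩
    · linarith
    · linarith
  set θ₀ : ℝ × ℝ := -t • m with hθ₀
  have hLθ₀ : L θ₀ < 1 := hgt1
  -- interior nonempty
  have hopen : IsOpen {θ : ℝ × ℝ | L θ < 1} := isOpen_lt hLc continuous_const
  have hsubK : {θ : ℝ × ℝ | L θ < 1} ⊆ K := by
    rw [hK]
    intro θ h
    simp only [Set.mem_setOf_eq] at h ⊢
    exact le_of_lt h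
  have hintsub : {θ : ℝ × ℝ | L θ < 1} ⊆ interior K := interior_maximal hsubK hopen
  have hintne : (interior K).Nonempty := ⟨θ₀, hintsub hLθ₀⟩
  -- frontier
  have hfrontier : frontier K = {θ : ℝ × ℝ | L θ = 1} := by
    ext θ
    constructor
    · intro hθ
      have hθK : θ ∈ K := by
        have := hθ.1
        rwa [hKclosed.closure_eq] at this
      have hle : L θ ≤ 1 := by rw [hK] at hθK; exact hθK
      have hnlt : ¬ L θ < 1 := fun h => hθ.2 (hintsub h)
      exact le_antisymm hle (not_lt.mp hnlt)
    · intro hθ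
      have hθ1 : L θ = 1 := hθ
      have hθK : θ ∈ K := by rw [hK]; exact (le_of_eq hθ1 : L θ ≤ 1)
      constructor
      · exact subset_closure hθK
      · intro hint
        obtain ⟨r, hr, hballK⟩ := Metric.mem_nhds_iff.mp (mem_interior_iff_mem_nhds.mp hint)
        have hθne : θ ≠ θ₀ := by
          intro h; rw [h] at hθ1; exact absurd hθ1 (ne_of_lt hLθ₀)
        have hdpos' : 0 < ‖θ - θ₀‖ := by
          rw [norm_pos_iff, sub_ne_zero]; exact hθne
        set δ : ℝ := min (r / (2 * ‖θ - θ₀‖)) 1 with hδ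
        have hδpos : 0 < δ := by
          apply lt_min _ one_pos
          positivity
        set θ' : ℝ × ℝ := θ + δ • (θ - θ₀) with hθ'
        have hθ'ball : θ' ∈ Metric.ball θ r := by
          rw [Metric.mem_ball, dist_eq_norm, hθ']
          have : θ + δ • (θ - θ₀) - θ = δ • (θ - θ₀) := by abel
          rw [this, norm_smul, Real.norm_eq_abs, abs_of_pos hδpos]
          have h1 : δ ≤ r / (2 * ‖θ - θ₀‖) := min_le_left _ _
          have h2 : δ * ‖θ - θ₀‖ ≤ (r / (2 * ‖θ - θ₀‖)) * ‖θ - θ₀‖ :=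
            mul_le_mul_of_nonneg_right h1 (le_of_lt hdpos')
          have h3 : (r / (2 * ‖θ - θ₀‖)) * ‖θ - θ₀‖ = r / 2 := by
            field_simp
          rw [h3] at h2
          linarith
        have hθ'K : θ' ∈ K := hballK hθ'ball
        have hLθ' : L θ' ≤ 1 := by rw [hK] at hθ'K; exact hθ'K
        -- convex combination: θ = a • θ' + b • θ₀
        set a : ℝ := 1 / (1 + δ) with ha
        set b : ℝ := δ / (1 + δ) with hb
        have h1δ : (0 : ℝ) < 1 + δ := by linarith
        have hapos : 0 < a := by positivity
        have hbpos : 0 < b := by positivity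
        have hab : a + b = 1 := by rw [ha, hb]; field_simp
        have haδ : a * δ = b := by rw [ha, hb]; field_simp
        have hcomb : a • θ' + b • θ₀ = θ := by
          rw [hθ', smul_add, smul_smul, haδ, smul_sub]
          have : a • θ + (b • θ - b • θ₀) + b • θ₀ = a • θ + b • θ := by abel
          rw [this, ← add_smul, hab, one_smul]
        have hcx := hconv.2 (Set.mem_univ θ') (Set.mem_univ θ₀)
          (le_of_lt hapos) (le_of_lt hbpos) hab
        rw [hcomb] at hcx
        have : (1 : ℝ) ≤ a * L θ' + b * L θ₀ := by
          rw [← hθ1]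
          simpa [smul_eq_mul] using hcx
        nlinarith [hapos.le, hbpos.le, hLθ', hLθ₀]
  exact ⟨hKconv, hKcompact, hintne, hfrontier⟩
end

section
/- Let f : ℤ^d → ℝ≥0 and let h : ℤ^d → ℝ with h(x) > 0 for all x, such that for every x the family (y ↦ f(y−x)·h(y)) is summable and h(x) = ∑'_y f(y−x)·h(y) (h is positive harmonic for the translation-invariant kernel of f). Assume h is minimal: every harmonic function g (in the same sense) with 0 ≤ g(x) ≤ h(x) for all x is of the form g = c·h for some constant c ≥ 0. Then for every e ∈ ℤ^d with f(e) > 0 there exists a constant a > 0 such that h(x + e) = a·h(x) for all x ∈ ℤ^d. -/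
open scoped NNReal

/-- A minimal positive harmonic function of a translation-invariant kernel on `ℤ^d`
is multiplied by a positive constant under translation by any step `e` with `f(e) > 0`. -/
theorem minimal_harmonic_translate
    (d : ℕ) (f : (Fin d → ℤ) → ℝ≥0) (h : (Fin d → ℤ) → ℝ)
    (hpos : ∀ x, 0 < h x)
    (hsumm : ∀ x, Summable (fun y => (f (y - x) : ℝ) * h y))
    (hharm : ∀ x, h x = ∑' y, (f (y - x) : ℝ) * h y)
    (hmin : ∀ g : (Fin d → ℤ) → ℝ,
      (∀ x, Summable (fun y => (f (y - x) : ℝ) * g y)) →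
      (∀ x, g x = ∑' y, (f (y - x) : ℝ) * g y) →
      (∀ x, 0 ≤ g x ∧ g x ≤ h x) →
      ∃ c : ℝ, 0 ≤ c ∧ ∀ x, g x = c * h x) :
    ∀ e : Fin d → ℤ, 0 < f e →
      ∃ a : ℝ, 0 < a ∧ ∀ x, h (x + e) = a * h x := by
  intro e he
  have hfe : (0:ℝ) < (f e : ℝ) := by exact_mod_cast he
  set g : (Fin d → ℤ) → ℝ := fun x => (f e : ℝ) * h (x + e) with hg
  -- translated summability
  have hsum' : ∀ x, Summable (fun z => (f (z - x) : ℝ) * h (z + e)) := by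
    intro x
    have := (Equiv.addRight e).summable_iff.mpr (hsumm (x + e))
    convert this using 2 with z
    simp [add_sub_add_right_eq_sub]
  have htsum' : ∀ x, (∑' z, (f (z - x) : ℝ) * h (z + e)) = h (x + e) := by
    intro x
    rw [hharm (x + e)]
    rw [← (Equiv.addRight e).tsum_eq (fun y => (f (y - (x + e)) : ℝ) * h y)]
    congr 1 with z
    simp [add_sub_add_right_eq_sub]
  have hgsumm : ∀ x, Summable (fun y => (f (y - x) : ℝ) * g y) := by
    intro x
    have := (hsum' x).mul_left (f e : ℝ)
    convert this using 2 with y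
    case e'_3 => rfl
    simp [hg]; ring
  have hgharm : ∀ x, g x = ∑' y, (f (y - x) : ℝ) * g y := by
    intro x
    have : (∑' y, (f (y - x) : ℝ) * g y) = (f e : ℝ) * ∑' y, (f (y - x) : ℝ) * h (y + e) := by
      rw [← tsum_mul_left]
      congr 1 with y
      simp [hg]; ring
    rw [this, htsum' x]
  have hgle : ∀ x, 0 ≤ g x ∧ g x ≤ h x := by
    intro x
    constructor
    · exact mul_nonneg hfe.le (hpos _).le
    · have hle := Summable.le_tsum (hsumm x) (x + e)
        (fun y _ => mul_nonneg (f _).coe_nonneg (hpos y).le)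
      have hx : x + e - x = e := by abel
      rw [hx] at hle
      calc g x = (f e : ℝ) * h (x + e) := rfl
        _ ≤ ∑' y, (f (y - x) : ℝ) * h y := hle
        _ = h x := (hharm x).symm
  obtain ⟨c, hc0, hc⟩ := hmin g hgsumm hgharm hgle
  have hcpos : 0 < c := by
    rcases lt_or_eq_of_le hc0 with h' | h'
    · exact h'
    · exfalso
      have hx := hc 0
      rw [← h', zero_mul] at hx
      have hgx : 0 < g 0 := mul_pos hfe (hpos _)
      linarith
  refine ⟨c / (f e : ℝ), div_pos hcpos hfe, fun x => ?_⟩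
  have := hc x
  simp only [hg] at this
  field_simp
  linarith [this]
end

section
/- Let f : ℤ² → ℝ be finitely supported with f(k,ℓ) = 0 whenever k > 1 or ℓ > 1. Let h : ℤ² → ℝ satisfy h(i,j) = 0 unless i ≥ 1 and j ≥ 1 (Dirichlet condition, h extended by zero outside the open quadrant), and suppose h is harmonic in the quadrant: for all i ≥ 1 and j ≥ 1, h(i,j) = ∑_{(k,ℓ)} f(k,ℓ)·h(i+k, j+ℓ) (a finite sum). Define the bivariate formal power series H over ℝ whose coefficient of X^a Y^b is h(a+1, b+1), the polynomial K = (∑_{(k,ℓ)} f(k,ℓ)·X^{1−k}·Y^{1−ℓ}) − X·Y (a genuine polynomial since k,ℓ ≤ 1 and f is finitely supported), and let K(X,0), K(0,Y), K(0,0) denote the substitutions of 0 for one or both variables, H(X,0) the series ∑_{a≥0} h(a+1,1)·X^a, H(0,Y) the series ∑_{b≥0} h(1,b+1)·Y^b, and H(0,0) = h(1,1). Then the identity of formal power series K·H = K(X,0)·H(X,0) + K(0,Y)·H(0,Y) − K(0,0)·H(0,0) holds. -/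
open MvPowerSeries

private lemma single_add_single_le (i j : ℕ) (m : Fin 2 →₀ ℕ) :
    Finsupp.single (0:Fin 2) i + Finsupp.single 1 j ≤ m ↔ i ≤ m 0 ∧ j ≤ m 1 := by
  rw [Finsupp.le_def]
  constructor
  · intro hle
    have h0 := hle 0; have h1 := hle 1
    simp [Finsupp.single_apply] at h0 h1
    exact ⟨h0, h1⟩
  · rintro ⟨h0, h1⟩ s
    fin_cases s <;> simp [Finsupp.single_apply, *]

private lemma sect_mul (s : Fin 2) (φ ψ φ' ψ' : MvPowerSeries (Fin 2) ℝ)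
    (hφ : ∀ m : Fin 2 →₀ ℕ, coeff m φ' = if m s = 0 then coeff m φ else 0)
    (hψ : ∀ m : Fin 2 →₀ ℕ, coeff m ψ' = if m s = 0 then coeff m ψ else 0)
    (m : Fin 2 →₀ ℕ) :
    coeff m (φ' * ψ') = if m s = 0 then coeff m (φ * ψ) else 0 := by
  classical
  rw [coeff_mul]
  split_ifs with hm
  · rw [coeff_mul]
    refine Finset.sum_congr rfl fun p hp => ?_
    rw [Finset.HasAntidiagonal.mem_antidiagonal] at hp
    have h : p.1 s + p.2 s = 0 := by
      have := congrArg (fun g : Fin 2 →₀ ℕ => g s) hp; simpa [hm] using this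
    have h1 : p.1 s = 0 := by omega
    have h2 : p.2 s = 0 := by omega
    rw [hφ, hψ, if_pos h1, if_pos h2]
  · refine Finset.sum_eq_zero fun p hp => ?_
    rw [Finset.HasAntidiagonal.mem_antidiagonal] at hp
    have h : p.1 s + p.2 s = m s := by
      simpa using congrArg (fun g : Fin 2 →₀ ℕ => g s) hp
    by_cases h1 : p.1 s = 0
    · have h2 : p.2 s ≠ 0 := by omega
      rw [hψ, if_neg h2, mul_zero]
    · rw [hφ, if_neg h1, zero_mul]

private lemma zero_sect_mul (φ ψ φ' ψ' : MvPowerSeries (Fin 2) ℝ)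
    (hφ : ∀ m : Fin 2 →₀ ℕ, coeff m φ' = if m = 0 then coeff 0 φ else 0)
    (hψ : ∀ m : Fin 2 →₀ ℕ, coeff m ψ' = if m = 0 then coeff 0 ψ else 0)
    (m : Fin 2 →₀ ℕ) :
    coeff m (φ' * ψ') = if m = 0 then coeff 0 (φ * ψ) else 0 := by
  classical
  rw [coeff_mul]
  split_ifs with hm
  · subst hm
    rw [coeff_mul]
    rw [Finsupp.antidiagonal_zero, Finset.sum_singleton, Finset.sum_singleton,
      hφ, hψ, if_pos rfl, if_pos rfl]
  · refine Finset.sum_eq_zero fun p hp => ?_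
    rw [Finset.HasAntidiagonal.mem_antidiagonal] at hp
    by_cases h1 : p.1 = 0
    · have h2 : p.2 ≠ 0 := by
        intro h2c; exact hm (by rw [← hp, h1, h2c, add_zero])
      rw [hψ, if_neg h2, mul_zero]
    · rw [hφ, if_neg h1, zero_mul]

/-- The functional equation `K·H = K(X,0)H(X,0) + K(0,Y)H(0,Y) − K(0,0)H(0,0)`
satisfied by the generating series `H` of a discrete harmonic function `h` with
Dirichlet boundary conditions in the quadrant, for a walk with small positive jumps. -/
theorem functional_equation_of_harmonicity
    (f : ℤ × ℤ → ℝ) (S : Finset (ℤ × ℤ)) (hS : ∀ p ∉ S, f p = 0)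
    (hsmall : ∀ p : ℤ × ℤ, (1 < p.1 ∨ 1 < p.2) → f p = 0)
    (h : ℤ × ℤ → ℝ) (hdir : ∀ p : ℤ × ℤ, ¬(1 ≤ p.1 ∧ 1 ≤ p.2) → h p = 0)
    (hharm : ∀ i j : ℤ, 1 ≤ i → 1 ≤ j →
      h (i, j) = ∑ p ∈ S, f p * h (i + p.1, j + p.2))
    (H : MvPowerSeries (Fin 2) ℝ)
    (hH : ∀ m : Fin 2 →₀ ℕ,
      MvPowerSeries.coeff m H = h (((m 0 : ℕ) : ℤ) + 1, ((m 1 : ℕ) : ℤ) + 1))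
    (K : MvPowerSeries (Fin 2) ℝ)
    (hK : K = (∑ p ∈ S, MvPowerSeries.C (f p)
        * (MvPowerSeries.X 0) ^ (1 - p.1).toNat * (MvPowerSeries.X 1) ^ (1 - p.2).toNat)
      - MvPowerSeries.X 0 * MvPowerSeries.X 1)
    (KX0 K0Y K00 HX0 H0Y H00 : MvPowerSeries (Fin 2) ℝ)
    (hKX0 : ∀ m : Fin 2 →₀ ℕ, coeff m KX0 = if m 1 = 0 then coeff m K else 0)
    (hK0Y : ∀ m : Fin 2 →₀ ℕ, coeff m K0Y = if m 0 = 0 then coeff m K else 0)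
    (hK00 : ∀ m : Fin 2 →₀ ℕ, coeff m K00 = if m = 0 then coeff 0 K else 0)
    (hHX0 : ∀ m : Fin 2 →₀ ℕ, coeff m HX0 = if m 1 = 0 then coeff m H else 0)
    (hH0Y : ∀ m : Fin 2 →₀ ℕ, coeff m H0Y = if m 0 = 0 then coeff m H else 0)
    (hH00 : ∀ m : Fin 2 →₀ ℕ, coeff m H00 = if m = 0 then coeff 0 H else 0) :
    K * H = KX0 * HX0 + K0Y * H0Y - K00 * H00 := by
  classical
  -- rewrite K as a sum of monomials
  set e : ℤ × ℤ → (Fin 2 →₀ ℕ) :=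
    fun p => Finsupp.single 0 (1 - p.1).toNat + Finsupp.single 1 (1 - p.2).toNat with he
  have hKm : K = (∑ p ∈ S, monomial (e p) (f p))
      - monomial (Finsupp.single 0 1 + Finsupp.single 1 1) 1 := by
    rw [hK]
    congr 1
    · refine Finset.sum_congr rfl fun p _ => ?_
      rw [X_pow_eq, X_pow_eq, show (MvPowerSeries.C (f p)) = monomial 0 (f p) from rfl,
        monomial_mul_monomial, monomial_mul_monomial]
      simp [he]
    · rw [show (MvPowerSeries.X 0 : MvPowerSeries (Fin 2) ℝ) = monomial (Finsupp.single 0 1) 1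
          from (X_pow_eq (R := ℝ) (0 : Fin 2) 1 ▸ (pow_one _)).symm,
        show (MvPowerSeries.X 1 : MvPowerSeries (Fin 2) ℝ) = monomial (Finsupp.single 1 1) 1
          from (X_pow_eq (R := ℝ) (1 : Fin 2) 1 ▸ (pow_one _)).symm,
        monomial_mul_monomial, one_mul]
  -- the key vanishing in the interior
  have key : ∀ m : Fin 2 →₀ ℕ, 1 ≤ m 0 → 1 ≤ m 1 → coeff m (K * H) = 0 := by
    intro m ha hb
    rw [hKm, sub_mul, Finset.sum_mul, map_sub, map_sum]
    simp only [coeff_monomial_mul]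
    have hsum : ∀ p ∈ S,
        (if e p ≤ m then f p * coeff (m - e p) H else 0)
          = f p * h (((m 0 : ℕ) : ℤ) + p.1, ((m 1 : ℕ) : ℤ) + p.2) := by
      intro p _
      by_cases hfp : f p = 0
      · simp [hfp]
      have hp1 : p.1 ≤ 1 := by
        by_contra hc; exact hfp (hsmall p (Or.inl (by omega)))
      have hp2 : p.2 ≤ 1 := by
        by_contra hc; exact hfp (hsmall p (Or.inr (by omega)))
      have hi : ((1 - p.1).toNat : ℤ) = 1 - p.1 := Int.toNat_of_nonneg (by omega)
      have hj : ((1 - p.2).toNat : ℤ) = 1 - p.2 := Int.toNat_of_nonneg (by omega)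
      by_cases hle : e p ≤ m
      · rw [if_pos hle, hH]
        have hle' := (single_add_single_le _ _ m).1 hle
        have h0 : (m - e p) 0 = m 0 - (1 - p.1).toNat := by
          rw [Finsupp.tsub_apply]; simp [he, Finsupp.single_apply]
        have h1 : (m - e p) 1 = m 1 - (1 - p.2).toNat := by
          rw [Finsupp.tsub_apply]; simp [he, Finsupp.single_apply]
        rw [h0, h1]
        have e0 : ((m 0 - (1 - p.1).toNat : ℕ) : ℤ) + 1 = ((m 0 : ℕ) : ℤ) + p.1 := by
          rw [Nat.cast_sub hle'.1, hi]; ring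
        have e1 : ((m 1 - (1 - p.2).toNat : ℕ) : ℤ) + 1 = ((m 1 : ℕ) : ℤ) + p.2 := by
          rw [Nat.cast_sub hle'.2, hj]; ring
        rw [e0, e1]
      · rw [if_neg hle]
        rw [single_add_single_le] at hle
        have : ¬(1 ≤ ((m 0 : ℕ) : ℤ) + p.1 ∧ 1 ≤ ((m 1 : ℕ) : ℤ) + p.2) := by
          rintro ⟨c1, c2⟩
          apply hle
          constructor <;> omega
        rw [hdir _ this, mul_zero]
    rw [Finset.sum_congr rfl hsum]
    set e11 : Fin 2 →₀ ℕ := Finsupp.single (0 : Fin 2) 1 + Finsupp.single 1 1 with he11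
    have h11 : e11 ≤ m := (single_add_single_le 1 1 m).2 ⟨ha, hb⟩
    rw [if_pos h11, one_mul, hH]
    have h0 : (m - e11) 0 = m 0 - 1 := by
      rw [Finsupp.tsub_apply]; simp [he11, Finsupp.single_apply]
    have h1 : (m - e11) 1 = m 1 - 1 := by
      rw [Finsupp.tsub_apply]; simp [he11, Finsupp.single_apply]
    rw [h0, h1, Nat.cast_sub ha, Nat.cast_sub hb]
    have heq := hharm ((m 0 : ℕ) : ℤ) ((m 1 : ℕ) : ℤ) (by exact_mod_cast ha) (by exact_mod_cast hb)
    simp only [Nat.cast_one]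
    rw [show ((m 0 : ℕ) : ℤ) - 1 + 1 = ((m 0 : ℕ) : ℤ) by ring,
      show ((m 1 : ℕ) : ℤ) - 1 + 1 = ((m 1 : ℕ) : ℤ) by ring, ← heq, sub_self]
  -- conclude coefficientwise
  ext m
  rw [map_sub, map_add, sect_mul 1 K H KX0 HX0 hKX0 hHX0 m,
    sect_mul 0 K H K0Y H0Y hK0Y hH0Y m, zero_sect_mul K H K00 H00 hK00 hH00 m]
  by_cases h0 : m 0 = 0 <;> by_cases h1 : m 1 = 0
  · have hm : m = 0 := by ext s; fin_cases s <;> simp [h0, h1]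
    subst hm
    simp
  · have hm : m ≠ 0 := fun hc => h1 (by simp [hc])
    rw [if_pos h0, if_neg h1, if_neg hm]
    ring
  · have hm : m ≠ 0 := fun hc => h0 (by simp [hc])
    rw [if_pos h1, if_neg h0, if_neg hm]
    ring
  · have hm : m ≠ 0 := fun hc => h0 (by simp [hc])
    rw [if_neg h0, if_neg h1, if_neg hm, key m (by omega) (by omega)]
    ring
end

section
/- Consider the simple random walk killed at the boundary of the quadrant: define Q : ℕ → ℤ² → ℝ by Q(0,(i,j)) = 1 if i ≥ 1 and j ≥ 1 and 0 otherwise, and Q(N+1,(i,j)) = (Q(N,(i+1,j)) + Q(N,(i−1,j)) + Q(N,(i,j+1)) + Q(N,(i,j−1)))/4 if i ≥ 1 and j ≥ 1, and Q(N+1,(i,j)) = 0 otherwise (so Q(N,(i,j)) is the probability that the simple walk started at (i,j) stays in the open quadrant {i ≥ 1, j ≥ 1} for its first N steps). Then there exists a constant c > 0 such that for all integers i ≥ 1 and j ≥ 1, N·Q(N,(i,j)) → c·i·j as N → ∞. -/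
open Filter Finset Real


noncomputable def bb : ℕ → ℤ → ℝ
  | 0, m => if m = 0 then 1 else 0
  | (N+1), m => (bb N (m - 1) + bb N (m + 1)) / 2

lemma bb_neg : ∀ (N : ℕ) (m : ℤ), bb N (-m) = bb N m := by
  intro N
  induction N with
  | zero => intro m; simp [bb, neg_eq_zero]
  | succ N ih =>
    intro m
    show (bb N (-m - 1) + bb N (-m + 1)) / 2 = (bb N (m - 1) + bb N (m + 1)) / 2
    have h1 : -m - 1 = -(m + 1) := by ring
    have h2 : -m + 1 = -(m - 1) := by ring
    rw [h1, h2, ih, ih]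
    ring

lemma bb_parity : ∀ (N : ℕ) (m : ℤ), ¬ Even ((N : ℤ) + m) → bb N m = 0 := by
  intro N
  induction N with
  | zero => intro m h; simp only [Nat.cast_zero, zero_add] at h
            simp [bb]; intro hm; exact absurd (hm ▸ Even.zero) h
  | succ N ih =>
    intro m h
    show (bb N (m - 1) + bb N (m + 1)) / 2 = 0
    have h1 : ¬ Even ((N : ℤ) + (m - 1)) := by
      intro he; apply h
      push_cast
      have : ((N : ℤ) + 1 + m) = (N + (m-1)) + 2 := by ring
      rw [this]; exact he.add (by decide)
    have h2 : ¬ Even ((N : ℤ) + (m + 1)) := by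
      intro he; apply h
      push_cast
      have : ((N : ℤ) + 1 + m) = (N + (m+1)) := by ring
      rw [this]; exact he
    rw [ih _ h1, ih _ h2]; norm_num

lemma bb_zero_of_gt : ∀ (N : ℕ) (m : ℤ), (N : ℤ) < m → bb N m = 0 := by
  intro N
  induction N with
  | zero => intro m h; simp only [Nat.cast_zero] at h; simp [bb]; omega
  | succ N ih =>
    intro m h
    show (bb N (m - 1) + bb N (m + 1)) / 2 = 0
    rw [ih (m-1) (by push_cast at h ⊢; omega), ih (m+1) (by push_cast at h ⊢; omega)]
    norm_num

lemma bb_eval : ∀ (N : ℕ) (m n : ℕ), 2 * n + m = N →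
    bb N (m : ℤ) = (N.choose (n + m) : ℝ) / 2 ^ N := by
  intro N
  induction N with
  | zero =>
    intro m n h
    have hm : m = 0 := by omega
    have hn : n = 0 := by omega
    subst hm hn
    simp [bb]
  | succ N ih =>
    intro m n h
    show (bb N ((m : ℤ) - 1) + bb N ((m : ℤ) + 1)) / 2 = _
    rcases Nat.eq_zero_or_pos m with hm | hm
    · subst hm
      -- m = 0, N = 2n - 1, n ≥ 1
      have hn : 1 ≤ n := by omega
      have hN : 2 * (n - 1) + 1 = N := by omega
      have hneg : bb N ((0:ℤ) - 1) = bb N 1 := by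
        rw [show ((0:ℤ) - 1) = -(1:ℤ) by ring, bb_neg]
      have hb := ih 1 (n-1) hN
      rw [Nat.cast_one] at hb
      rw [Nat.cast_zero, hneg, zero_add, hb]
      have hch : (N + 1).choose (n + 0) = 2 * N.choose ((n - 1) + 1) := by
        have h1 : n + 0 = (n - 1) + 1 := by omega
        rw [h1, Nat.choose_succ_succ]
        have h2 : N.choose (n-1) = N.choose (n-1+1) := by
          have hs : N - (n - 1) = n - 1 + 1 := by omega
          calc N.choose (n-1) = N.choose (N - (n-1)) := (Nat.choose_symm (by omega)).symm
            _ = N.choose (n-1+1) := by rw [hs]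
        simp only [Nat.choose_succ_succ, Nat.succ_eq_add_one]
        omega
      rw [hch]
      push_cast
      ring
    · -- m ≥ 1
      have h1 : bb N ((m:ℤ) - 1) = (N.choose (n + (m-1)) : ℝ) / 2 ^ N := by
        rw [show ((m:ℤ) - 1) = ((m - 1 : ℕ) : ℤ) by push_cast [hm]; ring]
        exact ih (m-1) n (by omega)
      rcases Nat.eq_zero_or_pos n with hn | hn
      · -- n = 0, N = m - 1, bb N (m+1) = 0
        subst hn
        have h2 : bb N ((m:ℤ) + 1) = 0 := bb_zero_of_gt N _ (by push_cast at h ⊢; omega)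
        rw [h1, h2]
        have e1 : 0 + (m - 1) = N := by omega
        have e2 : 0 + m = N + 1 := by omega
        rw [e1, e2, Nat.choose_self, Nat.choose_self]
        push_cast; ring
      · have h2 : bb N ((m:ℤ) + 1) = (N.choose ((n-1) + (m+1)) : ℝ) / 2 ^ N := by
          rw [show ((m:ℤ) + 1) = ((m + 1 : ℕ) : ℤ) by push_cast; ring]
          exact ih (m+1) (n-1) (by omega)
        rw [h1, h2]
        have e1 : (n-1) + (m+1) = n + m := by omega
        have e2 : n + (m - 1) = (n + m) - 1 := by omega
        rw [e1, e2]
        have hch : (N+1).choose (n + m) = N.choose (n + m - 1) + N.choose (n + m) := by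
          have h3 : n + m = (n + m - 1) + 1 := by omega
          rw [h3, Nat.choose_succ_succ]
          simp only [Nat.succ_eq_add_one, Nat.add_sub_cancel]
        rw [hch]
        push_cast; ring


lemma zsum_Ioc_consecutive (f : ℤ → ℝ) {a b c : ℤ} (h1 : a ≤ b) (h2 : b ≤ c) :
    ∑ k ∈ Finset.Ioc a b, f k + ∑ k ∈ Finset.Ioc b c, f k = ∑ k ∈ Finset.Ioc a c, f k := by
  rw [← Finset.Ioc_union_Ioc_eq_Ioc h1 h2, Finset.sum_union]
  apply Finset.disjoint_left.2
  intro x hx h'x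
  exact lt_irrefl _ ((Finset.mem_Ioc.1 h'x).1.trans_le (Finset.mem_Ioc.1 hx).2)

lemma zsum_shift_sub (f : ℤ → ℝ) (a b : ℤ) :
    ∑ k ∈ Finset.Ioc (a-1) (b-1), f k = ∑ k ∈ Finset.Ioc a b, f (k-1) := by
  rw [show a - 1 = a + -1 by ring, show b - 1 = b + -1 by ring,
    ← Finset.map_add_right_Ioc]
  simp only [Finset.sum_map, addRightEmbedding_apply]
  exact Finset.sum_congr rfl fun k _ => by rw [sub_eq_add_neg]

lemma zsum_shift_add (f : ℤ → ℝ) (a b : ℤ) :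
    ∑ k ∈ Finset.Ioc (a+1) (b+1), f k = ∑ k ∈ Finset.Ioc a b, f (k+1) := by
  rw [← Finset.map_add_right_Ioc]
  simp only [Finset.sum_map, addRightEmbedding_apply]

lemma telescope (f : ℤ → ℝ) (i : ℤ) (hi : 1 ≤ i) :
    (∑ k ∈ Finset.Ioc (-i-1) (i-1), f k) + (∑ k ∈ Finset.Ioc (-i+1) (i+1), f k)
      = (∑ k ∈ Finset.Ioc (-(i+1)) (i+1), f k) + (∑ k ∈ Finset.Ioc (-(i-1)) (i-1), f k) := by
  have h1 : (-i-1 : ℤ) ≤ -i+1 := by omega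
  have h2 : (-i+1 : ℤ) ≤ i-1 := by omega
  have h3 : (-i+1 : ℤ) ≤ i+1 := by omega
  have e1 : (-(i+1) : ℤ) = -i-1 := by ring
  have e2 : (-(i-1) : ℤ) = -i+1 := by ring
  rw [e1, e2, ← zsum_Ioc_consecutive f h1 h2, ← zsum_Ioc_consecutive f h1 h3]
  ring

lemma shiftW_sub (N : ℕ) (S : Finset ℤ) (a b : ℤ) :
    ∑ k ∈ Finset.Ioc a b, ∑ l ∈ S, bb N (k-1+l) * bb N (k-1-l)
      = ∑ k ∈ Finset.Ioc (a-1) (b-1), ∑ l ∈ S, bb N (k+l) * bb N (k-l) :=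
  (zsum_shift_sub (fun k => ∑ l ∈ S, bb N (k+l) * bb N (k-l)) a b).symm

lemma shiftW_add (N : ℕ) (S : Finset ℤ) (a b : ℤ) :
    ∑ k ∈ Finset.Ioc a b, ∑ l ∈ S, bb N (k+1+l) * bb N (k+1-l)
      = ∑ k ∈ Finset.Ioc (a+1) (b+1), ∑ l ∈ S, bb N (k+l) * bb N (k-l) :=
  (zsum_shift_add (fun k => ∑ l ∈ S, bb N (k+l) * bb N (k-l)) a b).symm

lemma shiftL_sub (N : ℕ) (T : Finset ℤ) (c d : ℤ) :
    ∑ k ∈ T, ∑ l ∈ Finset.Ioc c d, bb N (k+(l-1)) * bb N (k-(l-1))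
      = ∑ k ∈ T, ∑ l ∈ Finset.Ioc (c-1) (d-1), bb N (k+l) * bb N (k-l) :=
  Finset.sum_congr rfl fun k _ => (zsum_shift_sub (fun l => bb N (k+l) * bb N (k-l)) c d).symm

lemma shiftL_add (N : ℕ) (T : Finset ℤ) (c d : ℤ) :
    ∑ k ∈ T, ∑ l ∈ Finset.Ioc c d, bb N (k+(l+1)) * bb N (k-(l+1))
      = ∑ k ∈ T, ∑ l ∈ Finset.Ioc (c+1) (d+1), bb N (k+l) * bb N (k-l) :=
  Finset.sum_congr rfl fun k _ => (zsum_shift_add (fun l => bb N (k+l) * bb N (k-l)) c d).symm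

lemma Qrep (Q : ℕ → ℤ × ℤ → ℝ)
    (hQ0 : ∀ p : ℤ × ℤ, Q 0 p = if 1 ≤ p.1 ∧ 1 ≤ p.2 then 1 else 0)
    (hQsucc : ∀ (N : ℕ) (p : ℤ × ℤ),
      Q (N + 1) p = if 1 ≤ p.1 ∧ 1 ≤ p.2 then
        (Q N (p.1 + 1, p.2) + Q N (p.1 - 1, p.2)
          + Q N (p.1, p.2 + 1) + Q N (p.1, p.2 - 1)) / 4
      else 0) :
    ∀ (N : ℕ) (i j : ℤ), 0 ≤ i → 0 ≤ j →
      Q N (i, j) = ∑ k ∈ Finset.Ioc (-i) i, ∑ l ∈ Finset.Ioc (-j) j,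
        bb N (k+l) * bb N (k-l) := by
  intro N
  induction N with
  | zero =>
    intro i j hi hj
    rw [hQ0]
    have hinner : ∀ k ∈ Finset.Ioc (-i) i,
        (∑ l ∈ Finset.Ioc (-j) j, bb 0 (k+l) * bb 0 (k-l))
          = if k = 0 then (if 0 ∈ Finset.Ioc (-j) j then (1:ℝ) else 0) else 0 := by
      intro k _
      by_cases hk : k = 0
      · subst hk
        rw [if_pos rfl, ← Finset.sum_ite_eq' (Finset.Ioc (-j) j) (0:ℤ)
          (fun _ => (1:ℝ))]
        apply Finset.sum_congr rfl
        intro l _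
        show bb 0 (0+l) * bb 0 (0-l) = _
        simp only [bb, zero_add, zero_sub, neg_eq_zero]
        split_ifs <;> first | ring1 | (exfalso; omega)
      · rw [if_neg hk]
        apply Finset.sum_eq_zero
        intro l _
        show bb 0 (k+l) * bb 0 (k-l) = 0
        simp only [bb]
        split_ifs <;> first | ring1 | (exfalso; omega)
    rw [Finset.sum_congr rfl hinner, Finset.sum_ite_eq' (Finset.Ioc (-i) i) (0:ℤ)]
    simp only [Finset.mem_Ioc]
    split_ifs <;> first | rfl | (exfalso; omega)
  | succ N ih =>
    intro i j hi hj
    rw [hQsucc]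
    by_cases hij : 1 ≤ i ∧ 1 ≤ j
    · obtain ⟨hi1, hj1⟩ := hij
      rw [if_pos ⟨hi1, hj1⟩]
      rw [show ((i,j) : ℤ×ℤ).1 + 1 = i + 1 from rfl]
      rw [ih (i+1) j (by omega) hj, ih (i-1) j (by omega) hj,
        ih i (j+1) hi (by omega), ih i (j-1) hi (by omega)]
      have hpt : ∀ k l : ℤ, bb (N+1) (k+l) * bb (N+1) (k-l)
          = ((bb N (k-1+l) * bb N (k-1-l) + bb N (k+1+l) * bb N (k+1-l))
            + (bb N (k+(l-1)) * bb N (k-(l-1)) + bb N (k+(l+1)) * bb N (k-(l+1)))) / 4 := by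
        intro k l
        show ((bb N (k+l-1) + bb N (k+l+1)) / 2) * ((bb N (k-l-1) + bb N (k-l+1)) / 2) = _
        rw [show k-1+l = k+l-1 by ring, show k-1-l = k-l-1 by ring,
          show k+1+l = k+l+1 by ring, show k+1-l = k-l+1 by ring,
          show k+(l-1) = k+l-1 by ring, show k-(l-1) = k-l+1 by ring,
          show k+(l+1) = k+l+1 by ring, show k-(l+1) = k-l-1 by ring]
        ring
      simp only [hpt, ← Finset.sum_div]
      congr 1
      simp only [Finset.sum_add_distrib]
      rw [shiftW_sub N _ (-i) i, shiftW_add N _ (-i) i,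
        shiftL_sub N _ (-j) j, shiftL_add N _ (-j) j]
      rw [telescope (fun k => ∑ l ∈ Finset.Ioc (-j) j, bb N (k+l) * bb N (k-l)) i hi1]
      have h34 : (∑ k ∈ Finset.Ioc (-i) i, ∑ l ∈ Finset.Ioc (-j-1) (j-1),
            bb N (k+l) * bb N (k-l))
          + (∑ k ∈ Finset.Ioc (-i) i, ∑ l ∈ Finset.Ioc (-j+1) (j+1),
            bb N (k+l) * bb N (k-l))
          = (∑ k ∈ Finset.Ioc (-i) i, ∑ l ∈ Finset.Ioc (-(j+1)) (j+1),
            bb N (k+l) * bb N (k-l))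
          + (∑ k ∈ Finset.Ioc (-i) i, ∑ l ∈ Finset.Ioc (-(j-1)) (j-1),
            bb N (k+l) * bb N (k-l)) := by
        rw [← Finset.sum_add_distrib, ← Finset.sum_add_distrib]
        apply Finset.sum_congr rfl
        intro k _
        exact telescope (fun l => bb N (k+l) * bb N (k-l)) j hj1
      rw [add_assoc, h34]
    · rw [if_neg hij]
      have hd : i = 0 ∨ j = 0 := by omega
      rcases hd with h | h
      · subst h; simp
      · subst h; simp

lemma tendsto_even_odd {f : ℕ → ℝ} {l : ℝ}
    (he : Tendsto (fun n => f (2*n)) atTop (nhds l))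
    (ho : Tendsto (fun n => f (2*n+1)) atTop (nhds l)) :
    Tendsto f atTop (nhds l) := by
  rw [Metric.tendsto_atTop] at he ho ⊢
  intro ε hε
  obtain ⟨N1, h1⟩ := he ε hε
  obtain ⟨N2, h2⟩ := ho ε hε
  refine ⟨2*N1 + 2*N2 + 2, fun N hN => ?_⟩
  rcases Nat.even_or_odd N with ⟨n, hn⟩ | ⟨n, hn⟩
  · have : N = 2*n := by omega
    rw [this]; exact h1 n (by omega)
  · have : N = 2*n+1 := by omega
    rw [this]; exact h2 n (by omega)

lemma nat_mul_add_tendsto (c d : ℕ) (hc : 1 ≤ c) :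
    Tendsto (fun n : ℕ => c*n + d) atTop atTop := by
  apply tendsto_atTop_atTop.2
  intro b
  refine ⟨b, fun a ha => ?_⟩
  have := Nat.le_mul_of_pos_left a hc
  omega

lemma stirlingSeq_pos' (n : ℕ) (hn : 1 ≤ n) : 0 < Stirling.stirlingSeq n := by
  obtain ⟨k, rfl⟩ : ∃ k, n = k + 1 := ⟨n - 1, by omega⟩
  exact Stirling.stirlingSeq'_pos k

lemma fact_eq (x : ℕ) (hx : 1 ≤ x) :
    (Nat.factorial x : ℝ) = Stirling.stirlingSeq x * (Real.sqrt (2*x) * ((x:ℝ)/Real.exp 1)^x) := by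
  have hxR : (0:ℝ) < x := by exact_mod_cast hx
  have h1 : (0:ℝ) < Real.sqrt (2*x) * ((x:ℝ)/Real.exp 1)^x := by positivity
  rw [Stirling.stirlingSeq]
  field_simp

lemma binom_tendsto (m : ℕ) :
    Tendsto (fun n : ℕ => Real.sqrt ((2*n+m : ℕ) : ℝ)
      * (((2*n+m).choose (n+m) : ℝ) / 2^(2*n+m))) atTop
      (nhds (Real.sqrt (2/Real.pi))) := by
  -- four factors
  have hf1 : Tendsto (fun n : ℕ => Stirling.stirlingSeq (2*n+m) / (Stirling.stirlingSeq (n+m) * Stirling.stirlingSeq n)) atTop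
      (nhds (Real.sqrt π / (Real.sqrt π * Real.sqrt π))) := by
    have hN := Stirling.tendsto_stirlingSeq_sqrt_pi.comp (nat_mul_add_tendsto 2 m (by norm_num))
    have hK := Stirling.tendsto_stirlingSeq_sqrt_pi.comp (nat_mul_add_tendsto 1 m (by norm_num))
    have hn := Stirling.tendsto_stirlingSeq_sqrt_pi
    have hKK : Tendsto (fun n : ℕ => Stirling.stirlingSeq (n+m)) atTop (nhds (Real.sqrt π)) := by
      apply hK.congr
      intro n; simp [Function.comp, one_mul]
    exact (hN.div (hKK.mul hn) (by positivity))
  have hm0 : Tendsto (fun n : ℕ => (m:ℝ)/n) atTop (nhds 0) :=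
    tendsto_const_div_atTop_nhds_zero_nat (m:ℝ)
  have hf2 : Tendsto (fun n : ℕ => Real.sqrt (2*(2*(n:ℝ)+m)^2 / ((2*((n:ℝ)+m)) * (2*n))))
      atTop (nhds (Real.sqrt 2)) := by
    have hinner : Tendsto (fun n : ℕ => 2*(2*(n:ℝ)+m)^2 / ((2*((n:ℝ)+m)) * (2*n)))
        atTop (nhds 2) := by
      have h1 : Tendsto (fun n : ℕ => (2+(m:ℝ)/n)^2 / (2*((1:ℝ)+(m:ℝ)/n)))
          atTop (nhds 2) := by
        have hnum : Tendsto (fun n : ℕ => (2+(m:ℝ)/n)^2) atTop (nhds 4) := by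
          have := (tendsto_const_nhds (x := (2:ℝ)) (f := atTop (α := ℕ))).add hm0
          have h4 := this.pow 2
          norm_num at h4 ⊢
          exact h4
        have hden : Tendsto (fun n : ℕ => 2*((1:ℝ)+(m:ℝ)/n)) atTop (nhds 2) := by
          have := ((tendsto_const_nhds (x := (1:ℝ)) (f := atTop (α := ℕ))).add hm0)
          have h2 := this.const_mul 2
          norm_num at h2 ⊢
          exact h2
        have := hnum.div hden (by norm_num)
        norm_num at this ⊢
        exact this
      apply h1.congr'
      filter_upwards [eventually_gt_atTop 0] with n hn
      have hnR : (0:ℝ) < n := by exact_mod_cast hn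
      field_simp
    exact hinner.sqrt
  have hf3 : Tendsto (fun n : ℕ => (1 + (-((m:ℝ)/2))/((n+m : ℕ):ℝ))^(n+m)) atTop
      (nhds (Real.exp (-((m:ℝ)/2)))) := by
    have h := (Real.tendsto_one_add_div_pow_exp (-((m:ℝ)/2))).comp (tendsto_add_atTop_nat m)
    exact h
  have hf4 : Tendsto (fun n : ℕ => (1 + ((m:ℝ)/2)/(n:ℝ))^n) atTop
      (nhds (Real.exp ((m:ℝ)/2))) := Real.tendsto_one_add_div_pow_exp _
  have hT := (hf1.mul hf2).mul (hf3.mul hf4)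
  have hlim : Real.sqrt π / (Real.sqrt π * Real.sqrt π) * Real.sqrt 2
      * (Real.exp (-((m:ℝ)/2)) * Real.exp ((m:ℝ)/2)) = Real.sqrt (2/π) := by
    have hexp : Real.exp (-((m:ℝ)/2)) * Real.exp ((m:ℝ)/2) = 1 := by
      rw [← Real.exp_add]; norm_num
    have hππ : Real.sqrt π ≠ 0 := by positivity
    rw [hexp, mul_one, Real.sqrt_div (by norm_num : (0:ℝ) ≤ 2) π,
      show Real.sqrt π * Real.sqrt π = π from Real.mul_self_sqrt Real.pi_pos.le,
      show π = Real.sqrt π * Real.sqrt π from (Real.mul_self_sqrt Real.pi_pos.le).symm]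
    field_simp
    rw [Real.sqrt_sq (Real.sqrt_nonneg _)]
  rw [hlim] at hT
  apply hT.congr'
  filter_upwards [eventually_ge_atTop 1] with n hn
  -- notation
  have hP : (0:ℝ) < (n:ℝ) := by exact_mod_cast hn
  have hKR : (0:ℝ) < (n:ℝ) + m := by linarith [Nat.cast_nonneg (α := ℝ) m]
  have hNR : (0:ℝ) < 2*(n:ℝ) + m := by linarith [Nat.cast_nonneg (α := ℝ) m]
  have hsn : 0 < Stirling.stirlingSeq n := stirlingSeq_pos' n hn
  have hsK : 0 < Stirling.stirlingSeq (n+m) := stirlingSeq_pos' _ (by omega)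
  have hsN : 0 < Stirling.stirlingSeq (2*n+m) := stirlingSeq_pos' _ (by omega)
  have hcast : ((2*n+m : ℕ) : ℝ) = 2*(n:ℝ)+m := by push_cast; ring
  have hcastK : ((n+m : ℕ) : ℝ) = (n:ℝ)+m := by push_cast; ring
  have hchoose : (((2*n+m).choose (n+m)) : ℝ)
      = (Nat.factorial (2*n+m) : ℝ) / ((Nat.factorial (n+m) : ℝ) * (Nat.factorial n : ℝ)) := by
    rw [Nat.cast_choose ℝ (show n+m ≤ 2*n+m by omega),
      show 2*n+m - (n+m) = n from by omega]
  have e_f3 : (1 + (-((m:ℝ)/2))/((n+m : ℕ):ℝ)) = (2*(n:ℝ)+m)/(2*((n:ℝ)+m)) := by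
    rw [hcastK]; field_simp; ring
  have e_f4 : (1 + ((m:ℝ)/2)/(n:ℝ)) = (2*(n:ℝ)+m)/(2*(n:ℝ)) := by
    field_simp
  have e_f2 : Real.sqrt (2*(2*(n:ℝ)+m)^2 / ((2*((n:ℝ)+m)) * (2*(n:ℝ))))
      = (2*(n:ℝ)+m) * Real.sqrt 2 / (Real.sqrt (2*((n:ℝ)+m)) * Real.sqrt (2*(n:ℝ))) := by
    rw [Real.sqrt_div (by positivity), Real.sqrt_mul (by norm_num : (0:ℝ) ≤ 2),
      Real.sqrt_sq hNR.le, Real.sqrt_mul (by positivity)]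
    ring
  have e_sqrt : Real.sqrt ((2*(n:ℝ)+m)) * Real.sqrt (2*(2*(n:ℝ)+m))
      = (2*(n:ℝ)+m) * Real.sqrt 2 := by
    rw [← Real.sqrt_mul hNR.le, show (2*(n:ℝ)+m)*(2*(2*(n:ℝ)+m)) = 2*(2*(n:ℝ)+m)^2 by ring,
      Real.sqrt_mul (by norm_num : (0:ℝ) ≤ 2), Real.sqrt_sq hNR.le]
    ring
  rw [hcast, hchoose, fact_eq (2*n+m) (by omega), fact_eq (n+m) (by omega), fact_eq n hn,
    e_f3, e_f4, e_f2, hcast, hcastK]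
  have hs2K : (0:ℝ) < Real.sqrt (2*((n:ℝ)+m)) := by positivity
  have hs2n : (0:ℝ) < Real.sqrt (2*(n:ℝ)) := by positivity
  have hex : Real.exp 1 ≠ 0 := Real.exp_ne_zero 1
  have hsqN : (0:ℝ) < Real.sqrt (2*(n:ℝ)+m) := Real.sqrt_pos.2 hNR
  have e_s2N : Real.sqrt (2*(2*(n:ℝ)+m)) = (2*(n:ℝ)+m)*Real.sqrt 2 / Real.sqrt (2*(n:ℝ)+m) := by
    rw [eq_div_iff hsqN.ne']
    linear_combination e_sqrt
  rw [e_s2N]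
  have h2N : ((2:ℝ))^(2*n+m) ≠ 0 := by positivity
  have hA : Real.sqrt (2*((n:ℝ)+(m:ℝ))) ≠ 0 := hs2K.ne'
  have hB : Real.sqrt (2*(n:ℝ)) ≠ 0 := hs2n.ne'
  have hC : Real.sqrt (2*(n:ℝ)+(m:ℝ)) ≠ 0 := hsqN.ne'
  have hD : Real.sqrt 2 ≠ 0 := by positivity
  have hsn' : Stirling.stirlingSeq n ≠ 0 := hsn.ne'
  have hsK' : Stirling.stirlingSeq (n+m) ≠ 0 := hsK.ne'
  obtain ⟨A, hAe⟩ : ∃ A, Real.sqrt (2*((n:ℝ)+(m:ℝ))) = A := ⟨_, rfl⟩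
  obtain ⟨B, hBe⟩ : ∃ B, Real.sqrt (2*(n:ℝ)) = B := ⟨_, rfl⟩
  obtain ⟨C, hCe⟩ : ∃ C, Real.sqrt (2*(n:ℝ)+(m:ℝ)) = C := ⟨_, rfl⟩
  obtain ⟨D, hDe⟩ : ∃ D, Real.sqrt 2 = D := ⟨_, rfl⟩
  obtain ⟨E, hEe⟩ : ∃ E, Real.exp 1 = E := ⟨_, rfl⟩
  rw [hAe] at hA ⊢
  rw [hBe] at hB ⊢
  rw [hCe] at hC ⊢
  rw [hDe] at hD ⊢
  rw [hEe] at hex ⊢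
  simp only [div_pow, mul_pow]
  field_simp
  ring


lemma bpair (m : ℕ) :
    Tendsto (fun N : ℕ => Real.sqrt N * (bb N (m:ℤ) + bb N ((m:ℤ)+1))) atTop
      (nhds (Real.sqrt (2/π))) := by
  rw [← Filter.tendsto_add_atTop_iff_nat m]
  apply tendsto_even_odd
  · apply (binom_tendsto m).congr
    intro n
    have h1 : bb (2*n+m) ((m:ℤ)+1) = 0 := by
      apply bb_parity
      push_cast
      rintro ⟨r, hr⟩
      omega
    have h2 : bb (2*n+m) ((m:ℤ)) = ((2*n+m).choose (n+m) : ℝ) / 2^(2*n+m) :=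
      bb_eval (2*n+m) m n rfl
    rw [h1, h2, add_zero]
  · apply (binom_tendsto (m+1)).congr
    intro n
    have e : 2*n+(m+1) = 2*n+1+m := by omega
    rw [e]
    have h1 : bb (2*n+1+m) ((m:ℤ)) = 0 := by
      apply bb_parity
      push_cast
      rintro ⟨r, hr⟩
      omega
    have h2 : bb (2*n+1+m) ((m:ℤ)+1) = ((2*n+1+m).choose (n+(m+1)) : ℝ) / 2^(2*n+1+m) := by
      have := bb_eval (2*n+1+m) (m+1) n (by omega)
      push_cast at this ⊢
      exact this
    rw [h1, h2, zero_add]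

lemma bpairZ (a : ℤ) :
    Tendsto (fun N : ℕ => Real.sqrt N * (bb N a + bb N (a+1))) atTop
      (nhds (Real.sqrt (2/π))) := by
  rcases le_or_gt 0 a with h | h
  · apply (bpair a.toNat).congr
    intro N
    rw [Int.toNat_of_nonneg h]
  · set m' := (-1-a).toNat with hm'
    have hm : ((m' : ℕ) : ℤ) = -1-a := Int.toNat_of_nonneg (by omega)
    have ha : a = -(((m' : ℕ) : ℤ)+1) := by omega
    apply (bpair m').congr
    intro N
    rw [ha, bb_neg, show -((((m' : ℕ)) : ℤ)+1)+1 = -(((m' : ℕ)) : ℤ) by ring, bb_neg]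
    ring

lemma prodpair (u v : ℤ) (w : ℤ) (hw : u - v = 2*w) :
    Tendsto (fun N : ℕ => (N:ℝ) * (bb N u * bb N v + bb N (u+1) * bb N (v+1))) atTop
      (nhds (2/π)) := by
  have cross1 : ∀ N : ℕ, bb N u * bb N (v+1) = 0 := by
    intro N
    by_cases hE : Even ((N:ℤ)+u)
    · have : ¬ Even ((N:ℤ)+(v+1)) := by
        obtain ⟨r, hr⟩ := hE
        rintro ⟨t, ht⟩
        omega
      rw [bb_parity N _ this, mul_zero]
    · rw [bb_parity N u hE, zero_mul]
  have cross2 : ∀ N : ℕ, bb N (u+1) * bb N v = 0 := by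
    intro N
    by_cases hE : Even ((N:ℤ)+v)
    · have : ¬ Even ((N:ℤ)+(u+1)) := by
        obtain ⟨r, hr⟩ := hE
        rintro ⟨t, ht⟩
        omega
      rw [bb_parity N _ this, zero_mul]
    · rw [bb_parity N v hE, mul_zero]
  have key : ∀ N : ℕ, (Real.sqrt N * (bb N u + bb N (u+1))) * (Real.sqrt N * (bb N v + bb N (v+1)))
      = (N:ℝ) * (bb N u * bb N v + bb N (u+1) * bb N (v+1)) := by
    intro N
    have hNN : Real.sqrt N * Real.sqrt N = (N:ℝ) := Real.mul_self_sqrt (Nat.cast_nonneg N)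
    calc (Real.sqrt N * (bb N u + bb N (u+1))) * (Real.sqrt N * (bb N v + bb N (v+1)))
        = (Real.sqrt N * Real.sqrt N) * (bb N u * bb N v + bb N (u+1) * bb N (v+1))
          + (Real.sqrt N * Real.sqrt N) * (bb N u * bb N (v+1))
          + (Real.sqrt N * Real.sqrt N) * (bb N (u+1) * bb N v) := by ring
      _ = (N:ℝ) * (bb N u * bb N v + bb N (u+1) * bb N (v+1)) := by
          rw [cross1 N, cross2 N, hNN]
          ring
  have hmul := (bpairZ u).mul (bpairZ v)
  rw [show Real.sqrt (2/π) * Real.sqrt (2/π) = 2/π from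
    Real.mul_self_sqrt (by positivity)] at hmul
  exact hmul.congr key

lemma sum_Ioc_pair (f : ℤ → ℝ) (a : ℤ) :
    ∀ n : ℕ, ∑ k ∈ Finset.Ioc a (a + 2*(n:ℤ)), f k
      = ∑ t ∈ Finset.range n, (f (a + 2*(t:ℤ) + 1) + f (a + 2*(t:ℤ) + 2)) := by
  intro n
  induction n with
  | zero => simp
  | succ n ihn =>
    have e : a + 2*((n:ℤ)+1) = (a + 2*(n:ℤ)) + 2 := by ring
    have ecast : (((n+1:ℕ)):ℤ) = (n:ℤ)+1 := by push_cast; ring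
    rw [ecast, e, ← zsum_Ioc_consecutive f (by omega) (by omega : a + 2*(n:ℤ) ≤ a + 2*(n:ℤ) + 2)]
    rw [ihn, Finset.sum_range_succ]
    congr 1
    have hset : Finset.Ioc (a + 2*(n:ℤ)) (a + 2*(n:ℤ) + 2)
        = {a + 2*(n:ℤ) + 1, a + 2*(n:ℤ) + 2} := by
      ext x
      simp only [Finset.mem_Ioc, Finset.mem_insert, Finset.mem_singleton]
      omega
    rw [hset, Finset.sum_insert (by simp), Finset.sum_singleton]

/-- Denisov–Wachtel survival asymptotics for the simple walk in the quarter plane: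
`N · P(τ_{(i,j)} > N) → c·i·j` for a universal constant `c > 0`. -/
theorem simple_walk_quadrant_survival_asymptotics
    (Q : ℕ → ℤ × ℤ → ℝ)
    (hQ0 : ∀ p : ℤ × ℤ, Q 0 p = if 1 ≤ p.1 ∧ 1 ≤ p.2 then 1 else 0)
    (hQsucc : ∀ (N : ℕ) (p : ℤ × ℤ),
      Q (N + 1) p = if 1 ≤ p.1 ∧ 1 ≤ p.2 then
        (Q N (p.1 + 1, p.2) + Q N (p.1 - 1, p.2)
          + Q N (p.1, p.2 + 1) + Q N (p.1, p.2 - 1)) / 4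
      else 0) :
    ∃ c : ℝ, 0 < c ∧ ∀ i j : ℤ, 1 ≤ i → 1 ≤ j →
      Filter.Tendsto (fun N : ℕ => (N : ℝ) * Q N (i, j))
        Filter.atTop (nhds (c * (i : ℝ) * (j : ℝ))) := by
  refine ⟨4/π, by positivity, ?_⟩
  intro i j hi hj
  have hrep := Qrep Q hQ0 hQsucc
  have hiN : ((i.toNat : ℕ) : ℤ) = i := Int.toNat_of_nonneg (by omega)
  have hfun : ∀ N : ℕ, (N:ℝ) * Q N (i,j)
      = ∑ t ∈ Finset.range i.toNat, ∑ l ∈ Finset.Ioc (-j) j,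
          (N:ℝ) * (bb N ((-i+2*(t:ℤ)+1)+l) * bb N ((-i+2*(t:ℤ)+1)-l)
            + bb N (((-i+2*(t:ℤ)+1)+l)+1) * bb N (((-i+2*(t:ℤ)+1)-l)+1)) := by
    intro N
    rw [hrep N i j (by omega) (by omega),
      show Finset.Ioc (-i) i = Finset.Ioc (-i) (-i + 2*((i.toNat : ℕ) : ℤ)) from by
        congr 1; omega,
      sum_Ioc_pair (fun k => ∑ l ∈ Finset.Ioc (-j) j, bb N (k+l) * bb N (k-l)) (-i) i.toNat,
      Finset.mul_sum]
    apply Finset.sum_congr rfl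
    intro t _
    rw [← Finset.sum_add_distrib, Finset.mul_sum]
    apply Finset.sum_congr rfl
    intro l _
    rw [show -i+2*(t:ℤ)+2+l = ((-i+2*(t:ℤ)+1)+l)+1 by ring,
      show -i+2*(t:ℤ)+2-l = ((-i+2*(t:ℤ)+1)-l)+1 by ring]
  have hlimit := tendsto_finset_sum (Finset.range i.toNat) (fun t (_ : t ∈ Finset.range i.toNat) =>
    tendsto_finset_sum (Finset.Ioc (-j) j) (fun l (_ : l ∈ Finset.Ioc (-j) j) =>
      prodpair ((-i+2*(t:ℤ)+1)+l) ((-i+2*(t:ℤ)+1)-l) l (by ring)))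
  have hval : (∑ _t ∈ Finset.range i.toNat, ∑ _l ∈ Finset.Ioc (-j) j, (2/π : ℝ)) = 4/π*(i:ℝ)*(j:ℝ) := by
    rw [Finset.sum_const, Finset.sum_const, Finset.card_range, Int.card_Ioc]
    have h2j : ((j - -j).toNat : ℝ) = 2*(j:ℝ) := by
      have h := Int.toNat_of_nonneg (show (0:ℤ) ≤ j - -j by omega)
      calc ((j - -j).toNat : ℝ) = (((j - -j).toNat : ℤ) : ℝ) := by push_cast; ring
        _ = ((j - -j : ℤ) : ℝ) := by rw [h]
        _ = 2*(j:ℝ) := by push_cast; ring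
    have hiR : ((i.toNat : ℕ) : ℝ) = (i:ℝ) := by exact_mod_cast hiN
    rw [nsmul_eq_mul, nsmul_eq_mul, h2j, hiR]
    have hπ : (π:ℝ) ≠ 0 := Real.pi_ne_zero
    field_simp
    ring
  rw [hval] at hlimit
  exact hlimit.congr (fun N => (hfun N).symm)
end
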